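/- Suppose Z is globally calibrated: E[Y | σ(Z)] = Z almost surely. Then δ_B + δ_C = Cov( E[G | σ(Y)], Y − E[Z | σ(Y)] ), where δ_B := E[Z·G] − E[ E[Z | σ(Y)] · E[G | σ(Y)] ], δ_C := E[Y·G] − E[ E[Y | σ(Z)] · E[G | σ(Z)] ], and Cov(U, V) := E[U·V] − E[U]·E[V]. -/

import Mathlib

/-!
Write `g_Y = E[G|σ(Y)]`, `g_Z = E[G|σ(Z)]`. Pulling out `σ(Z)`-measurable factors gives
`E[Z·G] = E[Z·g_Z]`, and calibration turns `E[E[Y|σ(Z)]·g_Z]` into the same quantity, so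
`δ_B + δ_C = E[Y·G] − E[E[Z|σ(Y)]·g_Y] = E[g_Y·(Y − E[Z|σ(Y)])]` after pulling `Y` out against
`σ(Y)`. Calibration also gives `E[Z] = E[Y]`, so `Y − E[Z|σ(Y)]` is centred and the last
expectation is the covariance.
-/

open MeasureTheory ProbabilityTheory

section ConditionalExpectation

variable {Ω : Type*} {m m₀ : MeasurableSpace Ω} {μ : Measure Ω}

lemma integral_mul_condExp_of_stronglyMeasurable (hm : m ≤ m₀) [SigmaFinite (μ.trim hm)]
    {f g : Ω → ℝ} (hf : StronglyMeasurable[m] f) (hfg : Integrable (f * g) μ)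
    (hg : Integrable g μ) :
    ∫ ω, f ω * g ω ∂μ = ∫ ω, f ω * μ[g | m] ω ∂μ :=
  calc ∫ ω, f ω * g ω ∂μ = ∫ ω, μ[f * g | m] ω ∂μ := (integral_condExp hm).symm
    _ = ∫ ω, f ω * μ[g | m] ω ∂μ :=
      integral_congr_ae (condExp_mul_of_stronglyMeasurable_left hf hfg hg)

lemma integral_mul_condExp_of_memLp_two [IsFiniteMeasure μ] (hm : m ≤ m₀) {f g : Ω → ℝ}
    (hf : StronglyMeasurable[m] f) (hf₂ : MemLp f 2 μ) (hg₂ : MemLp g 2 μ) :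
    ∫ ω, f ω * g ω ∂μ = ∫ ω, f ω * μ[g | m] ω ∂μ :=
  integral_mul_condExp_of_stronglyMeasurable hm hf (hf₂.integrable_mul hg₂)
    (hg₂.integrable one_le_two)

theorem accounting_identity [IsFiniteMeasure μ] {mY mZ : MeasurableSpace Ω}
    (hmY : mY ≤ m₀) (hmZ : mZ ≤ m₀) {Y Z G : Ω → ℝ}
    (hYm : StronglyMeasurable[mY] Y) (hZm : StronglyMeasurable[mZ] Z)
    (hY₂ : MemLp Y 2 μ) (hZ₂ : MemLp Z 2 μ) (hG₂ : MemLp G 2 μ) (hcal : μ[Y | mZ] =ᵐ[μ] Z) :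
    ((∫ ω, Z ω * G ω ∂μ) - ∫ ω, μ[Z | mY] ω * μ[G | mY] ω ∂μ) +
    ((∫ ω, Y ω * G ω ∂μ) - ∫ ω, μ[Y | mZ] ω * μ[G | mZ] ω ∂μ)
      = (∫ ω, μ[G | mY] ω * (Y ω - μ[Z | mY] ω) ∂μ) -
        (∫ ω, μ[G | mY] ω ∂μ) * ∫ ω, (Y ω - μ[Z | mY] ω) ∂μ := by
  have hgY₂ : MemLp (μ[G | mY]) 2 μ := hG₂.condExp one_le_two
  have hzY₂ : MemLp (μ[Z | mY]) 2 μ := hZ₂.condExp one_le_two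
  have hZG : ∫ ω, Z ω * G ω ∂μ = ∫ ω, Z ω * μ[G | mZ] ω ∂μ :=
    integral_mul_condExp_of_memLp_two hmZ hZm hZ₂ hG₂
  have hYG : ∫ ω, Y ω * G ω ∂μ = ∫ ω, Y ω * μ[G | mY] ω ∂μ :=
    integral_mul_condExp_of_memLp_two hmY hYm hY₂ hG₂
  have hcalG : ∫ ω, μ[Y | mZ] ω * μ[G | mZ] ω ∂μ = ∫ ω, Z ω * μ[G | mZ] ω ∂μ :=
    integral_congr_ae (hcal.mul .rfl)
  have hcentred : ∫ ω, (Y ω - μ[Z | mY] ω) ∂μ = 0 := by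
    have hZY : ∫ ω, Z ω ∂μ = ∫ ω, Y ω ∂μ :=
      (integral_congr_ae hcal).symm.trans (integral_condExp hmZ)
    rw [integral_sub (hY₂.integrable one_le_two) integrable_condExp, integral_condExp hmY, hZY,
      sub_self]
  have hsplit : ∫ ω, μ[G | mY] ω * (Y ω - μ[Z | mY] ω) ∂μ
      = ∫ ω, Y ω * μ[G | mY] ω ∂μ - ∫ ω, μ[Z | mY] ω * μ[G | mY] ω ∂μ := by
    rw [← integral_sub (f := fun ω => Y ω * μ[G | mY] ω)
      (g := fun ω => μ[Z | mY] ω * μ[G | mY] ω) (hY₂.integrable_mul hgY₂)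
      (hzY₂.integrable_mul hgY₂)]
    exact integral_congr_ae (.of_forall fun ω => by ring)
  rw [hcentred, hsplit, hcalG, hZG, hYG]
  ring

end ConditionalExpectation

/-- **general accounting identity.** If `Z` is globally calibrated
(`E[Y|σ(Z)] = Z` a.s.), then `δ_B + δ_C = Cov(E[G|σ(Y)], Y − E[Z|σ(Y)])`, where
`δ_B = E[Z·G] − E[E[Z|σ(Y)]·E[G|σ(Y)]]`, `δ_C = E[Y·G] − E[E[Y|σ(Z)]·E[G|σ(Z)]]`,
and `Cov(U,V) = E[U·V] − E[U]·E[V]`. -/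
theorem stmt5 {Ω : Type*} [MeasurableSpace Ω] (P : Measure Ω) [IsProbabilityMeasure P]
    (Y Z G : Ω → ℝ) (hYm : Measurable Y) (hZm : Measurable Z) (hGm : Measurable G)
    (hY2 : MemLp Y 2 P) (hZ2 : MemLp Z 2 P) (hG01 : ∀ ω, G ω = 0 ∨ G ω = 1)
    (hcal : P[Y | MeasurableSpace.comap Z inferInstance] =ᵐ[P] Z) :
    ((∫ ω, Z ω * G ω ∂P) -
        ∫ ω, (P[Z | MeasurableSpace.comap Y inferInstance]) ω *
          (P[G | MeasurableSpace.comap Y inferInstance]) ω ∂P) +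
    ((∫ ω, Y ω * G ω ∂P) -
        ∫ ω, (P[Y | MeasurableSpace.comap Z inferInstance]) ω *
          (P[G | MeasurableSpace.comap Z inferInstance]) ω ∂P)
      = (∫ ω, (P[G | MeasurableSpace.comap Y inferInstance]) ω *
            (Y ω - (P[Z | MeasurableSpace.comap Y inferInstance]) ω) ∂P) -
        (∫ ω, (P[G | MeasurableSpace.comap Y inferInstance]) ω ∂P) *
          ∫ ω, (Y ω - (P[Z | MeasurableSpace.comap Y inferInstance]) ω) ∂P := by
  have hG₂ : MemLp G 2 P :=
    .of_bound hGm.aestronglyMeasurable 1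
      (.of_forall fun ω => by rcases hG01 ω with h | h <;> simp [h])
  exact accounting_identity hYm.comap_le hZm.comap_le (comap_measurable Y).stronglyMeasurable
    (comap_measurable Z).stronglyMeasurable hY2 hZ2 hG₂ hcal
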